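/- arXiv:2411.16663 — 3 statements merged into one kernel-verified Lean document; each statement's English description precedes it below -/
import Mathlib

section
/- Let a, b, c ∈ ℂ satisfy a² = b² + c², and define g : ℝ³ → ℂ (with coordinates (t,x,y)) by g(t,x,y) = exp(a t + b x + c y) − exp(a t − b x + c y) + exp(a t + b x − c y) − exp(a t − b x − c y). Then: (1) g satisfies the 2D wave equation ∂²g/∂t² − ∂²g/∂x² − ∂²g/∂y² = 0 at every point of ℝ³; (2) g satisfies the Dirichlet condition g(t,0,y) = 0 for all t,y ∈ ℝ; and (3) g satisfies the Neumann condition (∂g/∂y)(t,x,0) = 0 for all t,x ∈ ℝ. -/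
/-- Partial derivative in the first variable `t`. -/
noncomputable def d1 (u : ℝ × ℝ × ℝ → ℂ) : ℝ × ℝ × ℝ → ℂ :=
  fun p => deriv (fun s => u (s, p.2.1, p.2.2)) p.1

/-- Partial derivative in the second variable `x`. -/
noncomputable def d2 (u : ℝ × ℝ × ℝ → ℂ) : ℝ × ℝ × ℝ → ℂ :=
  fun p => deriv (fun s => u (p.1, s, p.2.2)) p.2.1

/-- Partial derivative in the third variable `y`. -/
noncomputable def d3 (u : ℝ × ℝ × ℝ → ℂ) : ℝ × ℝ × ℝ → ℂ :=
  fun p => deriv (fun s => u (p.1, p.2.1, s)) p.2.2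

/-- B-EPGP basis element for the 2D wave equation on the wedge with Dirichlet condition on
`{x = 0}` and Neumann condition on `{y = 0}`. -/
noncomputable def wedgeBasis (a b c : ℂ) : ℝ × ℝ × ℝ → ℂ :=
  fun p => Complex.exp (a * (p.1 : ℂ) + b * (p.2.1 : ℂ) + c * (p.2.2 : ℂ)) -
    Complex.exp (a * (p.1 : ℂ) - b * (p.2.1 : ℂ) + c * (p.2.2 : ℂ)) +
    Complex.exp (a * (p.1 : ℂ) + b * (p.2.1 : ℂ) - c * (p.2.2 : ℂ)) -
    Complex.exp (a * (p.1 : ℂ) - b * (p.2.1 : ℂ) - c * (p.2.2 : ℂ))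

/-!
Separating variables, `wedgeBasis a b c (t, x, y) = 4 e^{a t} sinh (b x) cosh (c y)`. Each factor is
an eigenfunction of the second derivative, with eigenvalues `a²`, `b²`, `c²`, so the wave operator
acts as multiplication by `a² - b² - c² = 0`. The Dirichlet condition is `sinh 0 = 0`, and the
Neumann condition is `cosh' 0 = sinh 0 = 0`.
-/

open Complex

noncomputable def separated (f g h : ℝ → ℂ) : ℝ × ℝ × ℝ → ℂ :=
  fun p => f p.1 * g p.2.1 * h p.2.2

section separated

variable (f g h : ℝ → ℂ)

@[simp]
theorem separated_apply (t x y : ℝ) : separated f g h (t, x, y) = f t * g x * h y := rfl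

theorem d1_separated : d1 (separated f g h) = separated (deriv f) g h := by
  funext p
  simp only [d1, separated, deriv_mul_const_field]

theorem d2_separated : d2 (separated f g h) = separated f (deriv g) h := by
  funext p
  simp only [d2, separated, deriv_mul_const_field, deriv_const_mul_field]

theorem d3_separated : d3 (separated f g h) = separated f g (deriv h) := by
  funext p
  simp only [d3, separated, deriv_const_mul_field]

theorem wave_separated {α β γ : ℂ} (hf : ∀ s, deriv (deriv f) s = α * f s)
    (hg : ∀ s, deriv (deriv g) s = β * g s) (hh : ∀ s, deriv (deriv h) s = γ * h s)
    (p : ℝ × ℝ × ℝ) :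
    d1 (d1 (separated f g h)) p - d2 (d2 (separated f g h)) p - d3 (d3 (separated f g h)) p =
      (α - β - γ) * separated f g h p := by
  simp only [d1_separated, d2_separated, d3_separated, separated, hf, hg, hh]
  ring

end separated

theorem HasDerivAt.comp_const_mul_ofReal {e : ℂ → ℂ} {e' a : ℂ} {s : ℝ}
    (he : HasDerivAt e e' (a * s)) : HasDerivAt (fun s : ℝ => e (a * s)) (a * e') s := by
  simpa [mul_comm] using (he.comp (s : ℂ) ((hasDerivAt_id _).const_mul a)).comp_ofReal

theorem deriv_exp_const_mul (a : ℂ) :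
    deriv (fun s : ℝ => exp (a * s)) = fun s : ℝ => a * exp (a * s) :=
  funext fun _ => (hasDerivAt_exp _).comp_const_mul_ofReal.deriv

theorem deriv_sinh_const_mul (a : ℂ) :
    deriv (fun s : ℝ => sinh (a * s)) = fun s : ℝ => a * cosh (a * s) :=
  funext fun _ => (hasDerivAt_sinh _).comp_const_mul_ofReal.deriv

theorem deriv_cosh_const_mul (a : ℂ) :
    deriv (fun s : ℝ => cosh (a * s)) = fun s : ℝ => a * sinh (a * s) :=
  funext fun _ => (hasDerivAt_cosh _).comp_const_mul_ofReal.deriv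

theorem deriv_deriv_exp_const_mul (a : ℂ) (s : ℝ) :
    deriv (deriv fun s : ℝ => exp (a * s)) s = a ^ 2 * exp (a * s) := by
  simp only [deriv_exp_const_mul, deriv_const_mul_field']
  ring

theorem deriv_deriv_sinh_const_mul (a : ℂ) (s : ℝ) :
    deriv (deriv fun s : ℝ => sinh (a * s)) s = a ^ 2 * sinh (a * s) := by
  simp only [deriv_sinh_const_mul, deriv_const_mul_field', deriv_cosh_const_mul]
  ring

theorem deriv_deriv_cosh_const_mul (a : ℂ) (s : ℝ) :
    deriv (deriv fun s : ℝ => cosh (a * s)) s = a ^ 2 * cosh (a * s) := by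
  simp only [deriv_cosh_const_mul, deriv_const_mul_field', deriv_sinh_const_mul]
  ring

theorem wedgeBasis_eq_separated (a b c : ℂ) :
    wedgeBasis a b c =
      separated (fun t => 4 * exp (a * t)) (fun x => sinh (b * x)) (fun y => cosh (c * y)) := by
  funext p
  simp only [wedgeBasis, separated, sinh, cosh, exp_add, exp_sub, exp_neg]
  field_simp
  ring

/-- The four-term exponential combination satisfies the 2D wave equation, the Dirichlet
condition on `{x = 0}`, and the Neumann condition on `{y = 0}` simultaneously and exactly. -/
theorem wedgeBasis_solves_wave_dirichlet_neumann
    (a b c : ℂ) (h : a ^ 2 = b ^ 2 + c ^ 2) :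
    (∀ p : ℝ × ℝ × ℝ,
      d1 (d1 (wedgeBasis a b c)) p - d2 (d2 (wedgeBasis a b c)) p -
        d3 (d3 (wedgeBasis a b c)) p = 0) ∧
    (∀ t y : ℝ, wedgeBasis a b c (t, 0, y) = 0) ∧
    (∀ t x : ℝ, d3 (wedgeBasis a b c) (t, x, 0) = 0) := by
  rw [wedgeBasis_eq_separated]
  refine ⟨fun p => ?wave, fun t y => ?dirichlet, fun t x => ?neumann⟩
  case wave =>
    have hf (t : ℝ) :
        deriv (deriv fun t : ℝ => 4 * exp (a * t)) t = a ^ 2 * (4 * exp (a * t)) := by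
      simp only [deriv_const_mul_field', deriv_deriv_exp_const_mul]
      ring
    rw [wave_separated _ _ _ hf (deriv_deriv_sinh_const_mul b) (deriv_deriv_cosh_const_mul c), h]
    ring
  case dirichlet => simp
  case neumann =>
    rw [d3_separated, separated_apply, deriv_cosh_const_mul]
    simp
end

section
/- Let z₁, z₂, τ ∈ ℂ satisfy τ² = z₁² + z₂², and define u : ℝ³ → ℂ (with coordinates (t,x,y)) as the sum of the sixteen exponentials exp(σ₁·z₁ x + σ₂·z₂ y + σ₃·τ t) and exp(σ₁·z₂ x + σ₂·z₁ y + σ₃·τ t) over all sign choices σ₁, σ₂, σ₃ ∈ {+1,−1}. Then: (1) u satisfies the 2D wave equation ∂²u/∂t² = ∂²u/∂x² + ∂²u/∂y² at every point of ℝ³; (2) (∂u/∂x)(t,0,y) = 0 for all t,y ∈ ℝ; and (3) ((∂u/∂x) − (∂u/∂y))(t,x,x) = 0 for all t,x ∈ ℝ, i.e. the normal derivative of u vanishes along the diagonal line {y = x}. -/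
/-- B-EPGP basis element for the 2D wave equation on the 45° wedge with Neumann boundary
conditions: the sum of the sixteen exponentials
`exp(σ₁ z₁ x + σ₂ z₂ y + σ₃ τ t)` and `exp(σ₁ z₂ x + σ₂ z₁ y + σ₃ τ t)` over all sign
choices `σ₁, σ₂, σ₃ ∈ {1,−1}`. -/
noncomputable def smallWedgeBasis (z₁ z₂ τ : ℂ) : ℝ × ℝ × ℝ → ℂ :=
  fun p => ∑ σ₁ ∈ ({1, -1} : Finset ℂ), ∑ σ₂ ∈ ({1, -1} : Finset ℂ),
    ∑ σ₃ ∈ ({1, -1} : Finset ℂ),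
      (Complex.exp (σ₁ * z₁ * (p.2.1 : ℂ) + σ₂ * z₂ * (p.2.2 : ℂ) + σ₃ * τ * (p.1 : ℂ)) +
        Complex.exp (σ₁ * z₂ * (p.2.1 : ℂ) + σ₂ * z₁ * (p.2.2 : ℂ) + σ₃ * τ * (p.1 : ℂ)))

/-!
Collapsing the sign sums, `u = 8 cosh(τt) (cosh(z₁x) cosh(z₂y) + cosh(z₂x) cosh(z₁y))`.
Along every coordinate line `u` is a combination of two functions `s ↦ cosh(a s)`, whose second
derivatives are `a² cosh(a s)`; hence `∂ₜ²u = τ²u` and `(∂ₓ² + ∂ᵧ²)u = (z₁² + z₂²)u`, and the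
wave equation is exactly the dispersion relation `τ² = z₁² + z₂²`. The boundary conditions need
no computation: `u` is even in `x`, so `∂ₓu` vanishes at `x = 0`, and `u` is symmetric in
`(x, y)`, so `∂ₓu = ∂ᵧu` on the diagonal.
-/

open Complex

section PartialDerivatives

variable {u : ℝ × ℝ × ℝ → ℂ}

theorem d2_eq_zero_of_even (hu : ∀ t x y, u (t, -x, y) = u (t, x, y)) (t y : ℝ) :
    d2 u (t, 0, y) = 0 := by
  have h := deriv_comp_neg (f := fun s => u (t, s, y)) (x := 0)
  simp only [hu, neg_zero] at h
  exact CharZero.eq_neg_self_iff.mp h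

theorem d3_eq_d2_of_symm (hu : ∀ t x y, u (t, x, y) = u (t, y, x)) (t x y : ℝ) :
    d3 u (t, x, y) = d2 u (t, y, x) := by
  simp only [d3, d2, hu t x]

theorem d3_d3_eq_d2_d2_of_symm (hu : ∀ t x y, u (t, x, y) = u (t, y, x)) (t x y : ℝ) :
    d3 (d3 u) (t, x, y) = d2 (d2 u) (t, y, x) := by
  change deriv (fun s => d3 u (t, x, s)) y = deriv (fun s => d2 u (t, s, x)) y
  simp only [d3_eq_d2_of_symm hu]

end PartialDerivatives

theorem hasDerivAt_cosh_mul (a : ℂ) (x : ℝ) :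
    HasDerivAt (fun s : ℝ => cosh (a * s)) (a * sinh (a * x)) x := by
  simpa [mul_comm] using (((hasDerivAt_id (x : ℂ)).const_mul a).ccosh).comp_ofReal

theorem hasDerivAt_sinh_mul (a : ℂ) (x : ℝ) :
    HasDerivAt (fun s : ℝ => sinh (a * s)) (a * cosh (a * x)) x := by
  simpa [mul_comm] using (((hasDerivAt_id (x : ℂ)).const_mul a).csinh).comp_ofReal

theorem deriv_deriv_add_cosh_mul (A B a b : ℂ) (x : ℝ) :
    deriv (deriv fun s : ℝ => A * cosh (a * s) + B * cosh (b * s)) x =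
      a ^ 2 * (A * cosh (a * x)) + b ^ 2 * (B * cosh (b * x)) := by
  have first : deriv (fun s : ℝ => A * cosh (a * s) + B * cosh (b * s)) =
      fun s : ℝ => A * (a * sinh (a * s)) + B * (b * sinh (b * s)) :=
    funext fun s =>
      (((hasDerivAt_cosh_mul a s).const_mul A).add ((hasDerivAt_cosh_mul b s).const_mul B)).deriv
  have second : HasDerivAt (fun s : ℝ => A * (a * sinh (a * s)) + B * (b * sinh (b * s)))
      (A * (a * (a * cosh (a * x))) + B * (b * (b * cosh (b * x)))) x :=
    (((hasDerivAt_sinh_mul a x).const_mul a).const_mul A).add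
      (((hasDerivAt_sinh_mul b x).const_mul b).const_mul B)
  rw [first, second.deriv]
  ring

section SmallWedgeBasis

variable (z₁ z₂ τ : ℂ)

theorem smallWedgeBasis_apply (t x y : ℝ) :
    smallWedgeBasis z₁ z₂ τ (t, x, y) =
      8 * (cosh (τ * t) * cosh (z₁ * x) * cosh (z₂ * y) +
        cosh (τ * t) * cosh (z₂ * x) * cosh (z₁ * y)) := by
  simp only [smallWedgeBasis, Finset.sum_pair (show (1 : ℂ) ≠ -1 by norm_num), cosh,
    neg_mul, one_mul, exp_add]
  ring

theorem smallWedgeBasis_neg_x (t x y : ℝ) :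
    smallWedgeBasis z₁ z₂ τ (t, -x, y) = smallWedgeBasis z₁ z₂ τ (t, x, y) := by
  simp only [smallWedgeBasis_apply, ofReal_neg, mul_neg, cosh_neg]

theorem smallWedgeBasis_swap (t x y : ℝ) :
    smallWedgeBasis z₁ z₂ τ (t, x, y) = smallWedgeBasis z₁ z₂ τ (t, y, x) := by
  simp only [smallWedgeBasis_apply]
  ring

theorem d1_d1_smallWedgeBasis (t x y : ℝ) :
    d1 (d1 (smallWedgeBasis z₁ z₂ τ)) (t, x, y) = τ ^ 2 * smallWedgeBasis z₁ z₂ τ (t, x, y) := by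
  have line : (fun s : ℝ => smallWedgeBasis z₁ z₂ τ (s, x, y)) = fun s : ℝ =>
      8 * cosh (z₁ * x) * cosh (z₂ * y) * cosh (τ * s) +
        8 * cosh (z₂ * x) * cosh (z₁ * y) * cosh (τ * s) := by
    funext s
    rw [smallWedgeBasis_apply]
    ring
  change deriv (deriv fun s => smallWedgeBasis z₁ z₂ τ (s, x, y)) t = _
  rw [line, deriv_deriv_add_cosh_mul, smallWedgeBasis_apply]
  ring

theorem d2_d2_smallWedgeBasis (t x y : ℝ) :
    d2 (d2 (smallWedgeBasis z₁ z₂ τ)) (t, x, y) =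
      8 * cosh (τ * t) * (z₁ ^ 2 * cosh (z₁ * x) * cosh (z₂ * y) +
        z₂ ^ 2 * cosh (z₂ * x) * cosh (z₁ * y)) := by
  have line : (fun s : ℝ => smallWedgeBasis z₁ z₂ τ (t, s, y)) = fun s : ℝ =>
      8 * cosh (τ * t) * cosh (z₂ * y) * cosh (z₁ * s) +
        8 * cosh (τ * t) * cosh (z₁ * y) * cosh (z₂ * s) := by
    funext s
    rw [smallWedgeBasis_apply]
    ring
  change deriv (deriv fun s => smallWedgeBasis z₁ z₂ τ (t, s, y)) x = _
  rw [line, deriv_deriv_add_cosh_mul]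
  ring

theorem laplacian_smallWedgeBasis (t x y : ℝ) :
    d2 (d2 (smallWedgeBasis z₁ z₂ τ)) (t, x, y) + d3 (d3 (smallWedgeBasis z₁ z₂ τ)) (t, x, y) =
      (z₁ ^ 2 + z₂ ^ 2) * smallWedgeBasis z₁ z₂ τ (t, x, y) := by
  rw [d3_d3_eq_d2_d2_of_symm (smallWedgeBasis_swap z₁ z₂ τ), d2_d2_smallWedgeBasis,
    d2_d2_smallWedgeBasis, smallWedgeBasis_apply]
  ring

end SmallWedgeBasis

/-- The sixteen-term exponential combination satisfies the 2D wave equation, the Neumann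
condition on `{x = 0}`, and the Neumann condition on the diagonal `{y = x}` (vanishing
normal derivative `(∂_x − ∂_y)u = 0` there), simultaneously and exactly. -/
theorem smallWedgeBasis_solves_wave_neumann
    (z₁ z₂ τ : ℂ) (h : τ ^ 2 = z₁ ^ 2 + z₂ ^ 2) :
    (∀ p : ℝ × ℝ × ℝ,
      d1 (d1 (smallWedgeBasis z₁ z₂ τ)) p =
        d2 (d2 (smallWedgeBasis z₁ z₂ τ)) p + d3 (d3 (smallWedgeBasis z₁ z₂ τ)) p) ∧
    (∀ t y : ℝ, d2 (smallWedgeBasis z₁ z₂ τ) (t, 0, y) = 0) ∧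
    (∀ t x : ℝ,
      d2 (smallWedgeBasis z₁ z₂ τ) (t, x, x) - d3 (smallWedgeBasis z₁ z₂ τ) (t, x, x) = 0) := by
  refine ⟨fun ⟨t, x, y⟩ => ?_, d2_eq_zero_of_even (smallWedgeBasis_neg_x z₁ z₂ τ),
    fun t x => ?_⟩
  · rw [d1_d1_smallWedgeBasis, laplacian_smallWedgeBasis, h]
  · rw [d3_eq_d2_of_symm (smallWedgeBasis_swap z₁ z₂ τ), sub_self]
end

section
/- Let j, k ∈ ℤ and s ∈ {+1,−1}, and define g : ℝ³ → ℂ (with coordinates (t,x,y)) by g(t,x,y) = exp(s·i·(π/4)·√(j²+k²)·t) · [ sin(π j x / 4)·sin(π k y / 4) − sin(π k x / 4)·sin(π j y / 4) ], where i = √−1. Then: (1) g satisfies the 2D wave equation ∂²g/∂t² = ∂²g/∂x² + ∂²g/∂y² at every point of ℝ³; (2) g(t,x,0) = 0 for all t,x; (3) g(t,4,y) = 0 for all t,y; and (4) g(t,x,x) = 0 for all t,x, so g vanishes on all three sides of the triangle {(x,y) : 0 < y < x < 4}. -/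
/-- B-EPGP basis element for the 2D wave equation on the triangle `{0 < y < x < 4}` with
Dirichlet boundary conditions:
`exp(s·i·(π/4)·√(j²+k²)·t) · [sin(πjx/4) sin(πky/4) − sin(πkx/4) sin(πjy/4)]`. -/
noncomputable def triangleBasis (j k : ℤ) (s : ℝ) : ℝ × ℝ × ℝ → ℂ :=
  fun p => Complex.exp ((s : ℂ) * Complex.I * ((Real.pi / 4 : ℝ) : ℂ) *
      (Real.sqrt ((j : ℝ) ^ 2 + (k : ℝ) ^ 2) : ℂ) * (p.1 : ℂ)) *
    (Complex.sin ((((Real.pi * j * p.2.1 / 4 : ℝ)) : ℂ)) *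
        Complex.sin ((((Real.pi * k * p.2.2 / 4 : ℝ)) : ℂ)) -
      Complex.sin ((((Real.pi * k * p.2.1 / 4 : ℝ)) : ℂ)) *
        Complex.sin ((((Real.pi * j * p.2.2 / 4 : ℝ)) : ℂ)))


/-! The basis element is `exp (ω t) · F (x, y)` with `F = sin (A x) sin (B y) − sin (B x) sin (A y)`,
`A = π j / 4`, `B = π k / 4` and `ω = s i (π / 4) √(j² + k²)`. Both products of sines are
eigenfunctions of the Laplacian with eigenvalue `−(A² + B²) = ω²`, so separation of variables gives
the wave equation. `F` vanishes at `y = 0` because `sin 0 = 0`, at `x = 4` because `sin (π n) = 0`,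
and on the diagonal because it is antisymmetric in `x` and `y`. -/

open Complex

theorem hasDerivAt_ofReal_const_mul (C : ℂ) (x : ℝ) :
    HasDerivAt (fun t : ℝ => C * t) C x := by
  simpa using (hasDerivAt_id x).ofReal_comp.const_mul C

theorem deriv_cexp_const_mul (C : ℂ) :
    deriv (fun t : ℝ => exp (C * t)) = fun t : ℝ => C * exp (C * t) := by
  funext t
  simpa [mul_comm] using (hasDerivAt_ofReal_const_mul C t).cexp.deriv

theorem hasDerivAt_csin_const_mul (A : ℂ) (t : ℝ) :
    HasDerivAt (fun t : ℝ => sin (A * t)) (A * cos (A * t)) t := by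
  simpa [Function.comp_def, mul_comm] using
    (hasDerivAt_sin _).comp t (hasDerivAt_ofReal_const_mul A t)

theorem hasDerivAt_ccos_const_mul (A : ℂ) (t : ℝ) :
    HasDerivAt (fun t : ℝ => cos (A * t)) (-(A * sin (A * t))) t := by
  simpa [Function.comp_def, mul_comm] using
    (hasDerivAt_cos _).comp t (hasDerivAt_ofReal_const_mul A t)

theorem wave_eq_of_helmholtz {C : ℂ} {F : ℝ → ℝ → ℂ}
    (hF : ∀ x y, deriv (deriv (F · y)) x + deriv (deriv (F x ·)) y = C ^ 2 * F x y)
    (p : ℝ × ℝ × ℝ) :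
    let u : ℝ × ℝ × ℝ → ℂ := fun p => exp (C * p.1) * F p.2.1 p.2.2
    d1 (d1 u) p = d2 (d2 u) p + d3 (d3 u) p := by
  obtain ⟨t, x, y⟩ := p
  simp only [d1, d2, d3, deriv_const_mul_field', deriv_mul_const_field', deriv_cexp_const_mul]
  rw [← mul_add, hF]
  ring

noncomputable def sinAntisymm (A B : ℂ) (x y : ℝ) : ℂ :=
  sin (A * x) * sin (B * y) - sin (B * x) * sin (A * y)

section sinAntisymm

variable (A B : ℂ) (x y : ℝ)

theorem sinAntisymm_swap : sinAntisymm A B x y = sinAntisymm B A y x := by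
  unfold sinAntisymm
  ring

theorem deriv_deriv_sinAntisymm_fst :
    deriv (deriv (sinAntisymm A B · y)) x =
      B ^ 2 * sin (B * x) * sin (A * y) - A ^ 2 * sin (A * x) * sin (B * y) := by
  have hderiv : deriv (sinAntisymm A B · y) =
      fun x : ℝ => A * cos (A * x) * sin (B * y) - B * cos (B * x) * sin (A * y) :=
    funext fun x => (((hasDerivAt_csin_const_mul A x).mul_const _).sub
      ((hasDerivAt_csin_const_mul B x).mul_const _)).deriv
  rw [hderiv]
  exact ((((hasDerivAt_ccos_const_mul A x).const_mul A).mul_const _).sub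
    (((hasDerivAt_ccos_const_mul B x).const_mul B).mul_const _)).deriv.trans (by ring)

theorem sinAntisymm_helmholtz :
    deriv (deriv (sinAntisymm A B · y)) x + deriv (deriv (sinAntisymm A B x ·)) y =
      -(A ^ 2 + B ^ 2) * sinAntisymm A B x y := by
  simp only [sinAntisymm_swap A B x, deriv_deriv_sinAntisymm_fst]
  unfold sinAntisymm
  ring

theorem sinAntisymm_zero_right : sinAntisymm A B x 0 = 0 := by
  simp [sinAntisymm]

theorem sinAntisymm_self : sinAntisymm A B x x = 0 := by
  unfold sinAntisymm
  ring

variable {A B x} in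
theorem sinAntisymm_eq_zero_of_sin_eq_zero (hA : sin (A * x) = 0) (hB : sin (B * x) = 0) :
    sinAntisymm A B x y = 0 := by
  simp [sinAntisymm, hA, hB]

end sinAntisymm

theorem triangleBasis_eq (j k : ℤ) (s : ℝ) :
    triangleBasis j k s = fun p => exp ((s : ℂ) * I * ((Real.pi / 4 : ℝ) : ℂ) *
        (Real.sqrt ((j : ℝ) ^ 2 + (k : ℝ) ^ 2) : ℂ) * p.1) *
      sinAntisymm ((Real.pi * j / 4 : ℝ) : ℂ) ((Real.pi * k / 4 : ℝ) : ℂ) p.2.1 p.2.2 := by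
  funext p
  simp only [triangleBasis, sinAntisymm]
  push_cast
  ring_nf

theorem sq_mul_I_mul_sqrt {s : ℝ} (hs : s ^ 2 = 1) (c a b : ℝ) :
    ((s : ℂ) * I * (c : ℂ) * (Real.sqrt (a ^ 2 + b ^ 2) : ℂ)) ^ 2 =
      -(((c * a : ℝ) : ℂ) ^ 2 + ((c * b : ℝ) : ℂ) ^ 2) := by
  have hsqrt : ((Real.sqrt (a ^ 2 + b ^ 2) : ℝ) : ℂ) ^ 2 = ((a ^ 2 + b ^ 2 : ℝ) : ℂ) := by
    rw [← ofReal_pow, Real.sq_sqrt (by positivity)]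
  have hs' : (s : ℂ) ^ 2 = 1 := by exact_mod_cast hs
  calc _ = (s : ℂ) ^ 2 * I ^ 2 * (c : ℂ) ^ 2 * ((Real.sqrt (a ^ 2 + b ^ 2) : ℝ) : ℂ) ^ 2 := by
        ring
    _ = _ := by
        rw [hs', I_sq, hsqrt]
        push_cast
        ring

theorem sin_pi_mul_int_div_four_mul_four (n : ℤ) :
    sin (((Real.pi * n / 4 : ℝ) : ℂ) * ((4 : ℝ) : ℂ)) = 0 := by
  rw [← sin_int_mul_pi n]
  push_cast
  ring_nf

/-- The antisymmetrized Fourier basis element satisfies the 2D wave equation and vanishes on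
the three sides `y = 0`, `x = 4`, `y = x` of the triangle `{0 < y < x < 4}`. -/
theorem triangleBasis_solves_wave_dirichlet
    (j k : ℤ) (s : ℝ) (hs : s = 1 ∨ s = -1) :
    (∀ p : ℝ × ℝ × ℝ,
      d1 (d1 (triangleBasis j k s)) p =
        d2 (d2 (triangleBasis j k s)) p + d3 (d3 (triangleBasis j k s)) p) ∧
    (∀ t x : ℝ, triangleBasis j k s (t, x, 0) = 0) ∧
    (∀ t y : ℝ, triangleBasis j k s (t, 4, y) = 0) ∧
    (∀ t x : ℝ, triangleBasis j k s (t, x, x) = 0) := by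
  have hs2 : s ^ 2 = 1 := by rcases hs with rfl | rfl <;> norm_num
  have hfreq := sq_mul_I_mul_sqrt hs2 (Real.pi / 4) j k
  rw [triangleBasis_eq]
  refine ⟨wave_eq_of_helmholtz fun x y => ?_, fun t x => ?_, fun t y => ?_, fun t x => ?_⟩
  · rw [sinAntisymm_helmholtz, hfreq]
    push_cast
    ring
  · simp only [sinAntisymm_zero_right, mul_zero]
  · dsimp only
    rw [sinAntisymm_eq_zero_of_sin_eq_zero y (sin_pi_mul_int_div_four_mul_four j)
      (sin_pi_mul_int_div_four_mul_four k), mul_zero]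
  · simp only [sinAntisymm_self, mul_zero]
end
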